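/- arXiv:1211.4483 — 2 statements merged into one kernel-verified Lean document; each statement's English description precedes it below -/
import Mathlib

section
/- Let 0 < d < 1/2. Then the function λ ↦ |1 - e^{-iλ}|^{-2d} is integrable on [-π,π], and (1/(2π)) ∫_{-π}^{π} |1 - e^{-iλ}|^{-2d} dλ = Γ(1-2d) / Γ(1-d)², where Γ is the real Gamma function. -/
/-!
Since `‖1 - e^{-iλ}‖² = 2 (1 - cos λ) = 4 hav λ` with the haversine `hav λ = (1 - cos λ) / 2`,
the integrand is the even function `4^{-d} hav(λ)^{-d}`. On `(0, π)` the substitution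
`t = hav λ`, for which `dt = (sin λ / 2) dλ = √(t (1 - t)) dλ`, turns `∫ hav^{-d}` into the Beta
integral `B(1/2 - d, 1/2)`, and the Legendre duplication formula at `1/2 - d` simplifies
`(4^{-d} / π) B(1/2 - d, 1/2)` to `Γ(1 - 2d) / Γ(1 - d)²`.
-/

open MeasureTheory Real Complex Set

lemma cpow_mul_one_sub_cpow_ofReal {u v t : ℝ} (ht : t ∈ Icc 0 1) :
    (t : ℂ) ^ ((u : ℂ) - 1) * (1 - (t : ℂ)) ^ ((v : ℂ) - 1) =
      ((t ^ (u - 1) * (1 - t) ^ (v - 1) : ℝ) : ℂ) := by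
  rw [Complex.ofReal_mul, Complex.ofReal_cpow ht.1, Complex.ofReal_cpow (sub_nonneg.2 ht.2)]
  push_cast
  rfl

lemma integrableOn_rpow_mul_one_sub_rpow {u v : ℝ} (hu : 0 < u) (hv : 0 < v) :
    IntegrableOn (fun t : ℝ => t ^ (u - 1) * (1 - t) ^ (v - 1)) (Ioo 0 1) := by
  have hβ := (intervalIntegrable_iff_integrableOn_Ioo_of_le zero_le_one).1
    (betaIntegral_convergent (u := u) (v := v) (by simpa) (by simpa))
  refine IntegrableOn.congr_fun hβ.re (fun t ht => ?_) measurableSet_Ioo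
  simp only [RCLike.re_to_complex, cpow_mul_one_sub_cpow_ofReal (Ioo_subset_Icc_self ht),
    Complex.ofReal_re]

lemma integral_rpow_mul_one_sub_rpow {u v : ℝ} (hu : 0 < u) (hv : 0 < v) :
    ∫ t in Ioo 0 1, t ^ (u - 1) * (1 - t) ^ (v - 1) =
      Real.Gamma u * Real.Gamma v / Real.Gamma (u + v) := by
  apply Complex.ofReal_injective
  rw [← integral_Ioc_eq_integral_Ioo, ← intervalIntegral.integral_of_le zero_le_one,
    ← intervalIntegral.integral_ofReal]
  push_cast [← Complex.Gamma_ofReal]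
  rw [← betaIntegral_eq_Gamma_mul_div u v (by simpa) (by simpa), betaIntegral]
  refine intervalIntegral.integral_congr fun t ht => ?_
  rw [uIcc_of_le zero_le_one] at ht
  rw [← Complex.ofReal_mul, cpow_mul_one_sub_cpow_ofReal ht]

noncomputable def haversin (x : ℝ) : ℝ := (1 - Real.cos x) / 2

lemma hasDerivAt_haversin (x : ℝ) : HasDerivAt haversin (Real.sin x / 2) x := by
  have := ((Real.hasDerivAt_cos x).const_sub 1).div_const (2 : ℝ)
  rwa [neg_neg] at this

lemma haversin_mem_Ioo {x : ℝ} (hx : x ∈ Ioo 0 π) : haversin x ∈ Ioo 0 1 := by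
  have hsin := Real.sin_pos_of_pos_of_lt_pi hx.1 hx.2
  have := Real.sin_sq_add_cos_sq x
  constructor <;> unfold haversin <;> nlinarith [Real.cos_le_one x, Real.neg_one_le_cos x]

lemma injOn_haversin : InjOn haversin (Ioo 0 π) := fun x hx y hy hxy =>
  Real.injOn_cos (Ioo_subset_Icc_self hx) (Ioo_subset_Icc_self hy)
    (by unfold haversin at hxy; linarith)

lemma image_haversin_Ioo : haversin '' Ioo 0 π = Ioo 0 1 := by
  refine Subset.antisymm (image_subset_iff.2 fun x hx => haversin_mem_Ioo hx) fun t ht => ?_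
  refine ⟨Real.arccos (1 - 2 * t), ⟨Real.arccos_pos.2 (by linarith [ht.1]),
    Real.arccos_lt_pi.2 (by linarith [ht.2])⟩, ?_⟩
  rw [haversin, Real.cos_arccos (by linarith [ht.2]) (by linarith [ht.1])]
  ring

lemma sqrt_haversin_mul_one_sub_haversin (x : ℝ) :
    √(haversin x * (1 - haversin x)) = |Real.sin x| / 2 := by
  rw [show haversin x * (1 - haversin x) = (Real.sin x / 2) ^ 2 by
    rw [haversin, div_pow, Real.sin_sq]; ring, Real.sqrt_sq_eq_abs, abs_div, abs_two]

lemma abs_deriv_haversin_smul_rpow_mul_one_sub_rpow {u v x : ℝ} (hx : x ∈ Ioo 0 π) :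
    |Real.sin x / 2| • (haversin x ^ (u - 1) * (1 - haversin x) ^ (v - 1)) =
      haversin x ^ (u - 1 / 2) * (1 - haversin x) ^ (v - 1 / 2) := by
  obtain ⟨h0, h1⟩ := haversin_mem_Ioo hx
  rw [abs_div, abs_two, ← sqrt_haversin_mul_one_sub_haversin, smul_eq_mul,
    Real.sqrt_mul h0.le, Real.sqrt_eq_rpow, Real.sqrt_eq_rpow,
    show u - 1 / 2 = 1 / 2 + (u - 1) by ring, show v - 1 / 2 = 1 / 2 + (v - 1) by ring,
    Real.rpow_add h0, Real.rpow_add (sub_pos.2 h1)]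
  ring

lemma integrableOn_haversin_rpow_mul_one_sub_haversin_rpow {u v : ℝ} (hu : 0 < u) (hv : 0 < v) :
    IntegrableOn (fun x => haversin x ^ (u - 1 / 2) * (1 - haversin x) ^ (v - 1 / 2))
      (Ioo 0 π) := by
  have hβ := integrableOn_rpow_mul_one_sub_rpow hu hv
  rw [← image_haversin_Ioo, integrableOn_image_iff_integrableOn_abs_deriv_smul measurableSet_Ioo
    (fun x _ => (hasDerivAt_haversin x).hasDerivWithinAt) injOn_haversin] at hβ
  exact hβ.congr_fun (fun x hx => abs_deriv_haversin_smul_rpow_mul_one_sub_rpow hx)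
    measurableSet_Ioo

lemma integral_haversin_rpow_mul_one_sub_haversin_rpow {u v : ℝ} (hu : 0 < u) (hv : 0 < v) :
    ∫ x in Ioo 0 π, haversin x ^ (u - 1 / 2) * (1 - haversin x) ^ (v - 1 / 2) =
      Real.Gamma u * Real.Gamma v / Real.Gamma (u + v) := by
  rw [← integral_rpow_mul_one_sub_rpow hu hv, ← image_haversin_Ioo,
    integral_image_eq_integral_abs_deriv_smul measurableSet_Ioo
      (fun x _ => (hasDerivAt_haversin x).hasDerivWithinAt) injOn_haversin]
  exact setIntegral_congr_fun measurableSet_Ioo fun x hx =>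
    (abs_deriv_haversin_smul_rpow_mul_one_sub_rpow hx).symm

lemma norm_one_sub_exp_neg_mul_I_sq (x : ℝ) :
    ‖1 - Complex.exp (-(x : ℂ) * Complex.I)‖ ^ 2 = 4 * haversin x := by
  rw [← Complex.normSq_eq_norm_sq, Complex.normSq_apply, haversin]
  simp only [neg_mul, sub_re, one_re, exp_re, neg_re, mul_re, ofReal_re, I_re, mul_zero,
    ofReal_im, I_im, mul_one, sub_self, neg_zero, Real.exp_zero, neg_im, mul_im, add_zero,
    Real.cos_neg, one_mul, sub_im, one_im, exp_im, Real.sin_neg, mul_neg, sub_neg_eq_add, zero_add]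
  nlinarith [Real.sin_sq_add_cos_sq x]

lemma norm_one_sub_exp_neg_mul_I_rpow (x s : ℝ) :
    ‖1 - Complex.exp (-(x : ℂ) * Complex.I)‖ ^ (2 * s) = 4 ^ s * haversin x ^ s := by
  rw [Real.rpow_mul (norm_nonneg _), Real.rpow_two, norm_one_sub_exp_neg_mul_I_sq,
    Real.mul_rpow zero_le_four (by unfold haversin; linarith [Real.cos_le_one x])]

section Even

variable {E : Type*} [NormedAddCommGroup E] {f : ℝ → E} {a : ℝ}

lemma Function.Even.intervalIntegrable_neg (hf : f.Even)
    (h : IntervalIntegrable f volume 0 a) : IntervalIntegrable f volume (-a) 0 := by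
  rw [IntervalIntegrable.iff_comp_neg, neg_neg, neg_zero]
  simpa only [hf.eq] using h.symm

lemma Function.Even.integral_neg_left [NormedSpace ℝ E] (hf : f.Even)
    (h : IntervalIntegrable f volume 0 a) : ∫ x in -a..a, f x = (2 : ℝ) • ∫ x in 0..a, f x := by
  have hneg : ∫ x in -a..0, f x = ∫ x in 0..a, f x := by
    simpa only [hf.eq, neg_zero] using
      (intervalIntegral.integral_comp_neg (a := 0) (b := a) f).symm
  rw [← intervalIntegral.integral_add_adjacent_intervals (hf.intervalIntegrable_neg h) h, hneg,
    two_smul]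

end Even

lemma Real.Gamma_one_half_sub (d : ℝ) (hd : d < 1) :
    Real.Gamma (1 / 2 - d) = 4 ^ d * √π * Real.Gamma (1 - 2 * d) / Real.Gamma (1 - d) := by
  have hdup := Real.Gamma_mul_Gamma_add_half (1 / 2 - d)
  rw [show 1 / 2 - d + 1 / 2 = 1 - d by ring, show 2 * (1 / 2 - d) = 1 - 2 * d by ring,
    show 1 - (1 - 2 * d) = 2 * d by ring, Real.rpow_mul zero_le_two] at hdup
  rw [eq_div_iff (Real.Gamma_pos_of_pos (by linarith)).ne', hdup]
  norm_num
  ring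

theorem fractional_noise_variance_general (d : ℝ) (hd1 : d < 1/2) :
    IntegrableOn
      (fun lam : ℝ => ‖1 - Complex.exp (-(lam : ℂ) * Complex.I)‖ ^ (-(2 * d)))
      (Set.Icc (-Real.pi) Real.pi) ∧
    (1 / (2 * Real.pi)) *
      ∫ lam in (-Real.pi)..Real.pi,
        ‖1 - Complex.exp (-(lam : ℂ) * Complex.I)‖ ^ (-(2 * d))
    = Real.Gamma (1 - 2 * d) / Real.Gamma (1 - d) ^ 2 := by
  have hF : (fun lam : ℝ => ‖1 - Complex.exp (-(lam : ℂ) * Complex.I)‖ ^ (-(2 * d))) =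
      fun lam => 4 ^ (-d) * haversin lam ^ (-d) := by
    ext lam
    rw [← norm_one_sub_exp_neg_mul_I_rpow, mul_neg]
  have hint := integrableOn_haversin_rpow_mul_one_sub_haversin_rpow (u := 1 / 2 - d)
    (by linarith) one_half_pos
  have hval := integral_haversin_rpow_mul_one_sub_haversin_rpow (u := 1 / 2 - d)
    (by linarith) one_half_pos
  simp only [sub_sub_cancel_left, sub_self, Real.rpow_zero, mul_one,
    show 1 / 2 - d + 1 / 2 = 1 - d by ring] at hint hval
  have hII := (intervalIntegrable_iff_integrableOn_Ioo_of_le pi_pos.le).2 hint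
  have heven : (fun x => haversin x ^ (-d)).Even := fun x => by
    simp only [haversin, Real.cos_neg]
  rw [hF]
  refine ⟨(intervalIntegrable_iff_integrableOn_Icc_of_le (neg_le_self pi_pos.le)).1
    (((heven.intervalIntegrable_neg hII).trans hII).const_mul _), ?_⟩
  rw [intervalIntegral.integral_const_mul, heven.integral_neg_left hII,
    intervalIntegral.integral_of_le pi_pos.le, integral_Ioc_eq_integral_Ioo, hval,
    Real.Gamma_one_half_sub d (by linarith), Real.Gamma_one_half_eq, Real.rpow_neg zero_le_four,
    smul_eq_mul]
  have hΓ : Real.Gamma (1 - d) ≠ 0 := (Real.Gamma_pos_of_pos (by linarith)).ne'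
  field_simp
  rw [Real.sq_sqrt pi_pos.le]

/-- For `0 < d < 1/2`, `λ ↦ |1 - e^{-iλ}|^{-2d}` is integrable on `[-π, π]` and
`(1/(2π)) ∫_{-π}^{π} |1 - e^{-iλ}|^{-2d} dλ = Γ(1-2d)/Γ(1-d)²`. -/
theorem fractional_noise_variance (d : ℝ) (hd0 : 0 < d) (hd1 : d < 1/2) :
    IntegrableOn
      (fun lam : ℝ => ‖1 - Complex.exp (-(lam : ℂ) * Complex.I)‖ ^ (-(2 * d)))
      (Set.Icc (-Real.pi) Real.pi) ∧
    (1 / (2 * Real.pi)) *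
      ∫ lam in (-Real.pi)..Real.pi,
        ‖1 - Complex.exp (-(lam : ℂ) * Complex.I)‖ ^ (-(2 * d))
    = Real.Gamma (1 - 2 * d) / Real.Gamma (1 - d) ^ 2 :=
  fractional_noise_variance_general d hd1
end

section
/- Let h : [-π,π] → ℝ be integrable and even, and suppose there are constants m ≤ M such that m ≤ 2π h(λ) ≤ M for almost every λ ∈ [-π,π]. Then for every x ∈ ℝⁿ, m ‖x‖² ≤ xᵀ T_n(h) x ≤ M ‖x‖², where T_n(h) is the n×n Toeplitz matrix with entries γ_h(l-m). In particular all eigenvalues of T_n(h) lie in [m, M]. -/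
open MeasureTheory Real Complex BigOperators Matrix

/-!
Writing `P_x(λ) = ∑ⱼ xⱼ e^{ijλ}`, the quadratic form of the Toeplitz matrix is
`xᵀ T_n(h) x = ∫ h |P_x|²`. For `h = 1` the matrix is `2π • 1`, which gives Parseval,
`∫ |P_x|² = 2π ‖x‖²`. Integrating `m |P_x|² ≤ 2π h |P_x|² ≤ M |P_x|²` then bounds the form, and
a quadratic form bounded by `m ‖x‖²` and `M ‖x‖²` has its eigenvalues in `[m, M]`.
-/

noncomputable section

def toeplitzCoeff (h : ℝ → ℝ) (j : ℤ) : ℂ :=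
  ∫ lam in (-π)..π, (h lam : ℂ) * exp (I * (j : ℂ) * lam)

/-- The paper's `T_n(h)`; it unfolds to the matrix written out in the statement. -/
def toeplitz (h : ℝ → ℝ) (n : ℕ) : Matrix (Fin n) (Fin n) ℝ :=
  of fun l k => (toeplitzCoeff h ((l : ℤ) - (k : ℤ))).re

def trigPoly {n : ℕ} (x : Fin n → ℝ) (lam : ℝ) : ℂ :=
  ∑ j, (x j : ℂ) * exp (I * ((j : ℤ) : ℂ) * lam)

theorem integral_exp_I_int_mul (j : ℤ) :
    ∫ lam in (-π)..π, exp (I * (j : ℂ) * lam) = if j = 0 then (2 * π : ℂ) else 0 := by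
  split_ifs with hj
  · simp [hj, two_mul]
  · have hc : I * (j : ℂ) ≠ 0 := by simp [hj]
    have hperiod : exp (I * j * π) = exp (I * j * (-π : ℝ)) := by
      rw [← mul_one (exp (I * j * (-π : ℝ))), ← Complex.exp_int_mul_two_pi_mul_I j,
        ← Complex.exp_add]
      push_cast; ring_nf
    rw [integral_exp_mul_complex hc, hperiod, sub_self, zero_div]

theorem exp_I_int_mul_mul_conj (l k : ℤ) (lam : ℝ) :
    exp (I * l * lam) * starRingEnd ℂ (exp (I * k * lam)) = exp (I * ((l - k : ℤ) : ℂ) * lam) := by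
  rw [← Complex.exp_conj, ← Complex.exp_add]
  simp only [map_mul, Complex.conj_I, Complex.conj_ofReal, map_intCast]
  push_cast; ring_nf

theorem normSq_trigPoly {n : ℕ} (x : Fin n → ℝ) (lam : ℝ) :
    (normSq (trigPoly x lam) : ℂ)
      = ∑ l, ∑ k, (x l * x k : ℂ) * exp (I * (((l : ℤ) - (k : ℤ) : ℤ) : ℂ) * lam) := by
  rw [← Complex.mul_conj, trigPoly, map_sum, Finset.sum_mul_sum]
  refine Finset.sum_congr rfl fun l _ => Finset.sum_congr rfl fun k _ => ?_
  rw [map_mul, Complex.conj_ofReal, ← exp_I_int_mul_mul_conj]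
  ring

theorem dotProduct_toeplitz_mulVec {n : ℕ} {h : ℝ → ℝ}
    (hh : IntervalIntegrable h volume (-π) π) (x : Fin n → ℝ) :
    x ⬝ᵥ toeplitz h n *ᵥ x = ∫ lam in (-π)..π, h lam * normSq (trigPoly x lam) := by
  have hint : ∀ j : ℤ,
      IntervalIntegrable (fun lam => (h lam : ℂ) * exp (I * j * lam)) volume (-π) π :=
    fun j => IntervalIntegrable.mul_continuousOn ⟨hh.1.ofReal, hh.2.ofReal⟩ (by fun_prop)
  have hcomplex : ∑ l, ∑ k, (x l * x k : ℂ) * toeplitzCoeff h ((l : ℤ) - (k : ℤ))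
      = ∫ lam in (-π)..π, (h lam : ℂ) * (normSq (trigPoly x lam) : ℂ) := by
    calc ∑ l, ∑ k, (x l * x k : ℂ) * toeplitzCoeff h ((l : ℤ) - (k : ℤ))
        = ∑ p : Fin n × Fin n, ∫ lam in (-π)..π, (x p.1 * x p.2 : ℂ) *
            ((h lam : ℂ) * exp (I * (((p.1 : ℤ) - (p.2 : ℤ) : ℤ) : ℂ) * lam)) := by
          simp only [toeplitzCoeff, intervalIntegral.integral_const_mul, Fintype.sum_prod_type]
      _ = ∫ lam in (-π)..π, ∑ p : Fin n × Fin n, (x p.1 * x p.2 : ℂ) *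
            ((h lam : ℂ) * exp (I * (((p.1 : ℤ) - (p.2 : ℤ) : ℤ) : ℂ) * lam)) :=
          (intervalIntegral.integral_finsetSum fun p _ => (hint _).const_mul _).symm
      _ = ∫ lam in (-π)..π, (h lam : ℂ) * (normSq (trigPoly x lam) : ℂ) := by
          simp only [normSq_trigPoly, Finset.mul_sum, Fintype.sum_prod_type]
          congr! 4 with lam l k
          ring
  calc x ⬝ᵥ toeplitz h n *ᵥ x
      = (∑ l, ∑ k, (x l * x k : ℂ) * toeplitzCoeff h ((l : ℤ) - (k : ℤ))).re := by
        simp only [dotProduct, mulVec, toeplitz, of_apply, Finset.mul_sum, Complex.re_sum,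
          ← Complex.ofReal_mul, Complex.re_ofReal_mul, mul_assoc]
        exact Finset.sum_congr rfl fun l _ => Finset.sum_congr rfl fun k _ => by ring
    _ = ∫ lam in (-π)..π, h lam * normSq (trigPoly x lam) := by
        simp_rw [hcomplex, ← Complex.ofReal_mul, intervalIntegral.integral_ofReal,
          Complex.ofReal_re]

theorem toeplitz_one (n : ℕ) :
    toeplitz (fun _ => 1) n = (2 * π) • (1 : Matrix (Fin n) (Fin n) ℝ) := by
  ext l k
  simp only [toeplitz, toeplitzCoeff, of_apply, Complex.ofReal_one, one_mul,
    integral_exp_I_int_mul, sub_eq_zero, Nat.cast_inj, Fin.val_inj, Matrix.smul_apply, one_apply]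
  split_ifs <;> simp

theorem integral_normSq_trigPoly {n : ℕ} (x : Fin n → ℝ) :
    ∫ lam in (-π)..π, normSq (trigPoly x lam) = 2 * π * ∑ i, x i ^ 2 := by
  have h := dotProduct_toeplitz_mulVec (h := fun _ => 1) intervalIntegrable_const x
  simp only [one_mul, toeplitz_one, smul_mulVec, one_mulVec, dotProduct_smul] at h
  simp [← h, dotProduct, sq]

theorem const_mul_integral_le_integral_mul {f g : ℝ → ℝ} {a b c : ℝ} (hab : a ≤ b)
    (hf : IntervalIntegrable f volume a b) (hg : Continuous g) (hg0 : ∀ t, 0 ≤ g t)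
    (hcf : ∀ᵐ t ∂volume.restrict (Set.Icc a b), c ≤ f t) :
    c * ∫ t in a..b, g t ≤ ∫ t in a..b, f t * g t := by
  rw [← intervalIntegral.integral_const_mul]
  refine intervalIntegral.integral_mono_ae_restrict hab ((hg.intervalIntegrable a b).const_mul c)
    (hf.mul_continuousOn hg.continuousOn) ?_
  filter_upwards [hcf] with t ht
  exact mul_le_mul_of_nonneg_right ht (hg0 t)

theorem integral_mul_le_const_mul_integral {f g : ℝ → ℝ} {a b c : ℝ} (hab : a ≤ b)
    (hf : IntervalIntegrable f volume a b) (hg : Continuous g) (hg0 : ∀ t, 0 ≤ g t)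
    (hfc : ∀ᵐ t ∂volume.restrict (Set.Icc a b), f t ≤ c) :
    ∫ t in a..b, f t * g t ≤ c * ∫ t in a..b, g t := by
  rw [← intervalIntegral.integral_const_mul]
  refine intervalIntegral.integral_mono_ae_restrict hab (hf.mul_continuousOn hg.continuousOn)
    ((hg.intervalIntegrable a b).const_mul c) ?_
  filter_upwards [hfc] with t ht
  exact mul_le_mul_of_nonneg_right ht (hg0 t)

theorem spectrum_subset_Icc_of_quadratic_form_bounds {ι : Type*} [Fintype ι] [DecidableEq ι]
    {A : Matrix ι ι ℝ} {m M : ℝ}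
    (hA : ∀ x, m * ∑ i, x i ^ 2 ≤ x ⬝ᵥ A *ᵥ x ∧ x ⬝ᵥ A *ᵥ x ≤ M * ∑ i, x i ^ 2) :
    spectrum ℝ A ⊆ Set.Icc m M := by
  intro μ hμ
  rw [← spectrum_toLin', ← Module.End.hasEigenvalue_iff_mem_spectrum] at hμ
  obtain ⟨v, hv⟩ := hμ.exists_hasEigenvector
  have hAv : A *ᵥ v = μ • v := by simpa using hv.apply_eq_smul
  have hquad : v ⬝ᵥ A *ᵥ v = μ * ∑ i, v i ^ 2 := by
    simp [hAv, dotProduct, Finset.mul_sum, sq, mul_left_comm]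
  have hpos : 0 < ∑ i, v i ^ 2 := by
    obtain ⟨i, hi⟩ := Function.ne_iff.mp hv.2
    exact Finset.sum_pos' (fun i _ => sq_nonneg _)
      ⟨i, Finset.mem_univ _, pow_two_pos_of_ne_zero hi⟩
  obtain ⟨hlo, hhi⟩ := hA v
  rw [hquad] at hlo hhi
  exact ⟨le_of_mul_le_mul_right hlo hpos, le_of_mul_le_mul_right hhi hpos⟩

end

theorem toeplitz_quadratic_form_bounds_general (n : ℕ) (h : ℝ → ℝ) (m M : ℝ)
    (hInt : IntegrableOn h (Set.Icc (-Real.pi) Real.pi))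
    (hBnd : ∀ᵐ lam ∂(volume.restrict (Set.Icc (-Real.pi) Real.pi)),
      m ≤ 2 * Real.pi * h lam ∧ 2 * Real.pi * h lam ≤ M) :
    (∀ x : Fin n → ℝ,
      m * (∑ i, x i ^ 2) ≤
        x ⬝ᵥ (Matrix.of fun l k : Fin n =>
          (∫ lam in (-Real.pi)..Real.pi,
            ((h lam : ℝ) : ℂ) * Complex.exp (Complex.I * (((l : ℤ) - (k : ℤ) : ℤ) : ℂ) * (lam : ℂ))).re).mulVec x ∧
      x ⬝ᵥ (Matrix.of fun l k : Fin n =>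
          (∫ lam in (-Real.pi)..Real.pi,
            ((h lam : ℝ) : ℂ) * Complex.exp (Complex.I * (((l : ℤ) - (k : ℤ) : ℤ) : ℂ) * (lam : ℂ))).re).mulVec x ≤
        M * (∑ i, x i ^ 2)) ∧
    spectrum ℝ (Matrix.of fun l k : Fin n =>
      (∫ lam in (-Real.pi)..Real.pi,
        ((h lam : ℝ) : ℂ) * Complex.exp (Complex.I * (((l : ℤ) - (k : ℤ) : ℤ) : ℂ) * (lam : ℂ))).re)
      ⊆ Set.Icc m M := by
  have hπ : 0 < 2 * π := by positivity
  have hh : IntervalIntegrable h volume (-π) π :=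
    (intervalIntegrable_iff_integrableOn_Icc_of_le (by linarith)).2 hInt
  have hquad : ∀ x : Fin n → ℝ, m * ∑ i, x i ^ 2 ≤ x ⬝ᵥ toeplitz h n *ᵥ x ∧
      x ⬝ᵥ toeplitz h n *ᵥ x ≤ M * ∑ i, x i ^ 2 := by
    intro x
    have hg : Continuous fun lam => normSq (trigPoly x lam) := by unfold trigPoly; fun_prop
    have hlo := const_mul_integral_le_integral_mul (by linarith) (hh.const_mul (2 * π)) hg
      (fun _ => normSq_nonneg _) (hBnd.mono fun _ hb => hb.1)
    have hhi := integral_mul_le_const_mul_integral (by linarith) (hh.const_mul (2 * π)) hg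
      (fun _ => normSq_nonneg _) (hBnd.mono fun _ hb => hb.2)
    simp only [mul_assoc, intervalIntegral.integral_const_mul, integral_normSq_trigPoly] at hlo hhi
    rw [dotProduct_toeplitz_mulVec hh]
    exact ⟨(mul_le_mul_iff_of_pos_left hπ).1 (by linarith),
      (mul_le_mul_iff_of_pos_left hπ).1 (by linarith)⟩
  exact ⟨hquad, spectrum_subset_Icc_of_quadratic_form_bounds hquad⟩

/-- If `m ≤ 2π h(λ) ≤ M` a.e. on `[-π,π]` (h integrable and even), then the
Toeplitz quadratic form satisfies `m‖x‖² ≤ xᵀT_n(h)x ≤ M‖x‖²` for every `x ∈ ℝⁿ`;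
in particular all eigenvalues of `T_n(h)` lie in `[m, M]`. -/
theorem toeplitz_quadratic_form_bounds (n : ℕ) (h : ℝ → ℝ) (m M : ℝ) (hmM : m ≤ M)
    (hInt : IntegrableOn h (Set.Icc (-Real.pi) Real.pi))
    (hEven : ∀ lam : ℝ, h (-lam) = h lam)
    (hBnd : ∀ᵐ lam ∂(volume.restrict (Set.Icc (-Real.pi) Real.pi)),
      m ≤ 2 * Real.pi * h lam ∧ 2 * Real.pi * h lam ≤ M) :
    (∀ x : Fin n → ℝ,
      m * (∑ i, x i ^ 2) ≤
        x ⬝ᵥ (Matrix.of fun l k : Fin n =>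
          (∫ lam in (-Real.pi)..Real.pi,
            ((h lam : ℝ) : ℂ) * Complex.exp (Complex.I * (((l : ℤ) - (k : ℤ) : ℤ) : ℂ) * (lam : ℂ))).re).mulVec x ∧
      x ⬝ᵥ (Matrix.of fun l k : Fin n =>
          (∫ lam in (-Real.pi)..Real.pi,
            ((h lam : ℝ) : ℂ) * Complex.exp (Complex.I * (((l : ℤ) - (k : ℤ) : ℤ) : ℂ) * (lam : ℂ))).re).mulVec x ≤
        M * (∑ i, x i ^ 2)) ∧
    spectrum ℝ (Matrix.of fun l k : Fin n =>
      (∫ lam in (-Real.pi)..Real.pi,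
        ((h lam : ℝ) : ℂ) * Complex.exp (Complex.I * (((l : ℤ) - (k : ℤ) : ℤ) : ℂ) * (lam : ℂ))).re)
      ⊆ Set.Icc m M :=
  toeplitz_quadratic_form_bounds_general n h m M hInt hBnd
end
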